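/- arXiv:1205.4779 — 3 statements merged into one kernel-verified Lean document; each statement's English description precedes it below -/
import Mathlib

section
/- Define 𝒯 : ℂ³ → M₂(ℂ) by 𝒯(X,Y,Z) = [[e^{−Z}, Y e^{Z}], [X e^{−Z}, (1+XY) e^{Z}]]. Then: (i) det 𝒯(X,Y,Z) = 1 for every (X,Y,Z) ∈ ℂ³; and (ii) if F = (X, Y, Z) : 𝔻 → ℂ³ is holomorphic on the open unit disk 𝔻 and satisfies the Legendrian condition Z'(z) + Y(z)·X'(z) = 0 for all z ∈ 𝔻, then the matrix-valued map ℒ = 𝒯 ∘ F satisfies ℒ₁₁(z)·ℒ₂₂'(z) − ℒ₂₁(z)·ℒ₁₂'(z) = 0 for all z ∈ 𝔻. -/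
/-- The transformation `𝒯(X,Y,Z) = [[e^{−Z}, Y e^{Z}], [X e^{−Z}, (1+XY) e^{Z}]]`. -/
noncomputable def calT (X Y Z : ℂ) : Matrix (Fin 2) (Fin 2) ℂ :=
  !![Complex.exp (-Z), Y * Complex.exp Z;
     X * Complex.exp (-Z), (1 + X * Y) * Complex.exp Z]

/-- (i) `det 𝒯(X,Y,Z) = 1`; (ii) if `F = (X,Y,Z)` is holomorphic on the unit disk and
Legendrian (`Z' + Y·X' = 0`), then `ℒ = 𝒯 ∘ F` satisfies the `SL(2,ℂ)` Legendrian
condition `ℒ₁₁·ℒ₂₂' − ℒ₂₁·ℒ₁₂' = 0`. -/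
theorem calT_legendrian_to_legendrian :
    (∀ X Y Z : ℂ, (calT X Y Z).det = 1) ∧
    ∀ X Y Z : ℂ → ℂ,
      (∀ z ∈ Metric.ball (0 : ℂ) 1, DifferentiableAt ℂ X z) →
      (∀ z ∈ Metric.ball (0 : ℂ) 1, DifferentiableAt ℂ Y z) →
      (∀ z ∈ Metric.ball (0 : ℂ) 1, DifferentiableAt ℂ Z z) →
      (∀ z ∈ Metric.ball (0 : ℂ) 1, deriv Z z + Y z * deriv X z = 0) →
      ∀ z ∈ Metric.ball (0 : ℂ) 1,
        calT (X z) (Y z) (Z z) 0 0 *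
            deriv (fun w => calT (X w) (Y w) (Z w) 1 1) z -
          calT (X z) (Y z) (Z z) 1 0 *
            deriv (fun w => calT (X w) (Y w) (Z w) 0 1) z = 0 := by
  constructor
  · intro X Y Z
    simp only [calT, Matrix.det_fin_two_of, Complex.exp_neg]
    field_simp
    ring
  · intro X Y Z hX hY hZ hL z hz
    have hX' := (hX z hz).hasDerivAt
    have hY' := (hY z hz).hasDerivAt
    have hZ' := (hZ z hz).hasDerivAt
    have hE : HasDerivAt (fun w => Complex.exp (Z w))
        (Complex.exp (Z z) * deriv Z z) z := hZ'.cexp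
    have h22 : HasDerivAt (fun w => (1 + X w * Y w) * Complex.exp (Z w))
        ((deriv X z * Y z + X z * deriv Y z) * Complex.exp (Z z)
          + (1 + X z * Y z) * (Complex.exp (Z z) * deriv Z z)) z :=
      ((hX'.mul hY').const_add 1).mul hE
    have h12 : HasDerivAt (fun w => Y w * Complex.exp (Z w))
        (deriv Y z * Complex.exp (Z z) + Y z * (Complex.exp (Z z) * deriv Z z)) z :=
      hY'.mul hE
    have e22 : deriv (fun w => calT (X w) (Y w) (Z w) 1 1) z
        = (deriv X z * Y z + X z * deriv Y z) * Complex.exp (Z z)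
          + (1 + X z * Y z) * (Complex.exp (Z z) * deriv Z z) := by
      simp only [calT, Matrix.cons_val', Matrix.cons_val_one, Matrix.head_cons,
        Matrix.empty_val', Matrix.cons_val_fin_one, Matrix.head_fin_const]
      exact h22.deriv
    have e12 : deriv (fun w => calT (X w) (Y w) (Z w) 0 1) z
        = deriv Y z * Complex.exp (Z z) + Y z * (Complex.exp (Z z) * deriv Z z) := by
      simp only [calT, Matrix.cons_val', Matrix.cons_val_one, Matrix.cons_val_zero,
        Matrix.head_cons, Matrix.empty_val', Matrix.cons_val_fin_one]
      exact h12.deriv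
    rw [e22, e12]
    simp only [calT, Matrix.of_apply, Matrix.cons_val', Matrix.cons_val_zero,
      Matrix.cons_val_one, Matrix.head_cons, Matrix.empty_val', Matrix.cons_val_fin_one,
      Matrix.head_fin_const]
    have hexp : Complex.exp (-Z z) * Complex.exp (Z z) = 1 := by
      rw [← Complex.exp_add]; simp
    have hl := hL z hz
    linear_combination hexp * (deriv Z z + Y z * deriv X z) + hl
end

section
/- Let X, Y, W : 𝔻 → ℂ be holomorphic functions on the open unit disk satisfying W'(z) = −Y(z)·X'(z) for all z ∈ 𝔻, and define ℒ(z) = [[e^{−W(z)}, Y(z) e^{W(z)}], [X(z) e^{−W(z)}, (1 + X(z)Y(z)) e^{W(z)}]]. Then det ℒ(z) = 1 for all z, and ℒ(z)⁻¹·ℒ'(z) = [[0, e^{2W(z)}(Y'(z) − Y(z)² X'(z))], [e^{−2W(z)} X'(z), 0]] for all z ∈ 𝔻. -/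
open Complex

/-- The paper's `𝒯(x, y, w)`, with `w` in the role of `Z`. -/
noncomputable def liftMatrix (x y w : ℂ) : Matrix (Fin 2) (Fin 2) ℂ :=
  !![exp (-w), y * exp w; x * exp (-w), (1 + x * y) * exp w]

/-- The derivative of `𝒯` along a curve with velocity `(x', y', w')` at `(x, y, w)`. -/
noncomputable def liftMatrixTangent (x y w x' y' w' : ℂ) : Matrix (Fin 2) (Fin 2) ℂ :=
  !![-w' * exp (-w), (y' + y * w') * exp w;
     (x' - x * w') * exp (-w), (x' * y + x * y' + (1 + x * y) * w') * exp w]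

theorem det_liftMatrix (x y w : ℂ) : (liftMatrix x y w).det = 1 := by
  rw [liftMatrix, Matrix.det_fin_two_of, exp_neg]
  field_simp [exp_ne_zero w]
  ring

theorem inv_liftMatrix (x y w : ℂ) :
    (liftMatrix x y w)⁻¹ = !![(1 + x * y) * exp w, -(y * exp w); -(x * exp (-w)), exp (-w)] := by
  rw [Matrix.inv_def, det_liftMatrix, liftMatrix, Matrix.adjugate_fin_two_of]
  simp

/-- The diagonal of `𝒯⁻¹ d𝒯` is `∓ (dw + y dx)`, which the contact condition kills. -/
theorem inv_liftMatrix_mul_liftMatrixTangent (x y w x' y' w' : ℂ) :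
    (liftMatrix x y w)⁻¹ * liftMatrixTangent x y w x' y' w' =
      !![-(w' + y * x'), exp (2 * w) * (y' - y ^ 2 * x');
         exp (-(2 * w)) * x', w' + y * x'] := by
  have hexp_two : exp (2 * w) = exp w * exp w := by rw [← exp_add, two_mul]
  rw [inv_liftMatrix, liftMatrixTangent, Matrix.mul_fin_two, exp_neg, neg_mul, exp_neg, hexp_two]
  have hexp := exp_ne_zero w
  ext i j
  fin_cases i <;> fin_cases j <;> simp <;> field_simp <;> ring

theorem derivMatrix_eq_liftMatrixTangent {𝕜 : Type*} [NontriviallyNormedField 𝕜]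
    [NormedAlgebra 𝕜 ℂ] {X Y W : 𝕜 → ℂ} {x' y' w' : ℂ} {t : 𝕜}
    (hX : HasDerivAt X x' t) (hY : HasDerivAt Y y' t) (hW : HasDerivAt W w' t) :
    !![deriv (fun s => exp (-W s)) t, deriv (fun s => Y s * exp (W s)) t;
       deriv (fun s => X s * exp (-W s)) t, deriv (fun s => (1 + X s * Y s) * exp (W s)) t] =
      liftMatrixTangent (X t) (Y t) (W t) x' y' w' := by
  have h₁₁ : HasDerivAt (fun s => exp (-W s)) _ t := hW.neg.cexp
  have h₁₂ : HasDerivAt (fun s => Y s * exp (W s)) _ t := hY.mul hW.cexp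
  have h₂₁ : HasDerivAt (fun s => X s * exp (-W s)) _ t := hX.mul h₁₁
  have h₂₂ : HasDerivAt (fun s => (1 + X s * Y s) * exp (W s)) _ t :=
    ((hX.mul hY).const_add 1).mul hW.cexp
  rw [h₁₁.deriv, h₁₂.deriv, h₂₁.deriv, h₂₂.deriv, liftMatrixTangent]
  ext i j
  fin_cases i <;> fin_cases j <;> simp <;> ring

/-- For holomorphic `X, Y, W` on the unit disk with `W' = −Y·X'`, the matrix
`ℒ = [[e^{−W}, Y e^{W}], [X e^{−W}, (1+XY) e^{W}]]` satisfies `det ℒ = 1` and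
`ℒ⁻¹ℒ' = [[0, e^{2W}(Y' − Y²X')], [e^{−2W}X', 0]]`. -/
theorem legendrian_lift_computation (X Y W : ℂ → ℂ)
    (hX : ∀ z ∈ Metric.ball (0 : ℂ) 1, DifferentiableAt ℂ X z)
    (hY : ∀ z ∈ Metric.ball (0 : ℂ) 1, DifferentiableAt ℂ Y z)
    (hW : ∀ z ∈ Metric.ball (0 : ℂ) 1, DifferentiableAt ℂ W z)
    (hLeg : ∀ z ∈ Metric.ball (0 : ℂ) 1, deriv W z = -(Y z * deriv X z))
    (ℒ : ℂ → Matrix (Fin 2) (Fin 2) ℂ)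
    (hℒ : ∀ z, ℒ z =
      !![Complex.exp (-W z), Y z * Complex.exp (W z);
         X z * Complex.exp (-W z), (1 + X z * Y z) * Complex.exp (W z)]) :
    ∀ z ∈ Metric.ball (0 : ℂ) 1,
      (ℒ z).det = 1 ∧
      (ℒ z)⁻¹ *
          !![deriv (fun w => Complex.exp (-W w)) z,
             deriv (fun w => Y w * Complex.exp (W w)) z;
             deriv (fun w => X w * Complex.exp (-W w)) z,
             deriv (fun w => (1 + X w * Y w) * Complex.exp (W w)) z] =
        !![0, Complex.exp (2 * W z) * (deriv Y z - Y z ^ 2 * deriv X z);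
           Complex.exp (-(2 * W z)) * deriv X z, 0] := by
  intro z hz
  have hℒz : ℒ z = liftMatrix (X z) (Y z) (W z) := hℒ z
  have hWd : HasDerivAt W (-(Y z * deriv X z)) z := hLeg z hz ▸ (hW z hz).hasDerivAt
  refine ⟨hℒz ▸ det_liftMatrix _ _ _, ?_⟩
  rw [hℒz, derivMatrix_eq_liftMatrixTangent (hX z hz).hasDerivAt (hY z hz).hasDerivAt hWd,
    inv_liftMatrix_mul_liftMatrixTangent, neg_add_cancel, neg_zero]
end

section
/- Let m > 0 and let w, a, b, y be complex numbers with 1/m ≤ |e^{w}| ≤ m and |y| ≤ 1/3. Then |e^{−2w}·a|² + |e^{2w}·(b − y²·a)|² ≥ (3/(4m⁴))·(|a|² + |b|²). -/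
/-! Perturbing `b` by a vector `c` with `‖c‖ ≤ ‖a‖ / 9` costs at most a factor `3/4` in
`‖a‖² + ‖b‖²`, and the `Y²`-correction of the lift metric is such a perturbation when `|Y| ≤ 1/3`.
The conformal factors `|e^{∓2W}|` scale the two terms by `r^{∓2}` with `r = |e^W| ∈ [1/m, m]`,
and both `r⁻⁴` and `r⁴` are at least `1/m⁴`. -/

open Complex

lemma three_quarters_mul_sq_add_sq_le_sq_add_sq_sub {E : Type*} [SeminormedAddCommGroup E]
    (a b c : E) (hc : 9 * ‖c‖ ≤ ‖a‖) :
    3 / 4 * (‖a‖ ^ 2 + ‖b‖ ^ 2) ≤ ‖a‖ ^ 2 + ‖b - c‖ ^ 2 := by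
  have hb : ‖b‖ ≤ ‖b - c‖ + ‖c‖ := norm_le_norm_sub_add b c
  -- `(s + t)² ≤ 4/3 s² + 4 t²`, i.e. `2 s t ≤ s²/3 + 3 t²`
  nlinarith [norm_nonneg b, norm_nonneg c, sq_nonneg (‖b - c‖ - 3 * ‖c‖)]

lemma inv_pow_four_mul_sq_add_sq_le {m r : ℝ} (hr : 0 < r) (h1 : 1 / m ≤ r) (h2 : r ≤ m)
    (x y : ℝ) : (x ^ 2 + y ^ 2) / m ^ 4 ≤ ((r ^ 2)⁻¹ * x) ^ 2 + (r ^ 2 * y) ^ 2 := by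
  have hm : 0 < m := hr.trans_le h2
  have hlo : 1 / m ^ 4 ≤ r ^ 4 := by
    calc 1 / m ^ 4 = (1 / m) ^ 4 := by ring
      _ ≤ r ^ 4 := by gcongr
  have hhi : 1 / m ^ 4 ≤ 1 / r ^ 4 := by gcongr
  calc (x ^ 2 + y ^ 2) / m ^ 4 = 1 / m ^ 4 * x ^ 2 + 1 / m ^ 4 * y ^ 2 := by ring
    _ ≤ 1 / r ^ 4 * x ^ 2 + r ^ 4 * y ^ 2 := by gcongr
    _ = ((r ^ 2)⁻¹ * x) ^ 2 + (r ^ 2 * y) ^ 2 := by field_simp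

lemma norm_exp_two_mul (w : ℂ) : ‖exp (2 * w)‖ = ‖exp w‖ ^ 2 := by
  rw [two_mul, exp_add, norm_mul, sq]

lemma norm_exp_neg_two_mul (w : ℂ) : ‖exp (-(2 * w))‖ = (‖exp w‖ ^ 2)⁻¹ := by
  rw [exp_neg, norm_inv, norm_exp_two_mul]

theorem lift_metric_estimate_general (m : ℝ) (w a b y : ℂ)
    (h1 : 1 / m ≤ ‖Complex.exp w‖)
    (h2 : ‖Complex.exp w‖ ≤ m)
    (hy : ‖y‖ ≤ 1 / 3) :
    3 / (4 * m ^ 4) * (‖a‖ ^ 2 + ‖b‖ ^ 2) ≤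
      ‖Complex.exp (-(2 * w)) * a‖ ^ 2 +
        ‖Complex.exp (2 * w) * (b - y ^ 2 * a)‖ ^ 2 := by
  have hr : 0 < ‖exp w‖ := norm_pos_iff.mpr (exp_ne_zero w)
  have hsmall : 9 * ‖y ^ 2 * a‖ ≤ ‖a‖ := by
    rw [norm_mul, norm_pow]
    have : ‖y‖ ^ 2 ≤ 1 / 9 := by nlinarith [norm_nonneg y]
    nlinarith [norm_nonneg a]
  rw [norm_mul, norm_mul, norm_exp_two_mul, norm_exp_neg_two_mul]
  calc 3 / (4 * m ^ 4) * (‖a‖ ^ 2 + ‖b‖ ^ 2) = 3 / 4 * (‖a‖ ^ 2 + ‖b‖ ^ 2) / m ^ 4 := by ring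
    _ ≤ (‖a‖ ^ 2 + ‖b - y ^ 2 * a‖ ^ 2) / m ^ 4 := by
      gcongr; exact three_quarters_mul_sq_add_sq_le_sq_add_sq_sub a b _ hsmall
    _ ≤ _ := inv_pow_four_mul_sq_add_sq_le hr h1 h2 _ _

/-- If `1/m ≤ |e^{w}| ≤ m` and `|y| ≤ 1/3`, then
`|e^{−2w}a|² + |e^{2w}(b − y²a)|² ≥ (3/(4m⁴))(|a|² + |b|²)`. -/
theorem lift_metric_estimate (m : ℝ) (hm : 0 < m) (w a b y : ℂ)
    (h1 : 1 / m ≤ ‖Complex.exp w‖)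
    (h2 : ‖Complex.exp w‖ ≤ m)
    (hy : ‖y‖ ≤ 1 / 3) :
    3 / (4 * m ^ 4) * (‖a‖ ^ 2 + ‖b‖ ^ 2) ≤
      ‖Complex.exp (-(2 * w)) * a‖ ^ 2 +
        ‖Complex.exp (2 * w) * (b - y ^ 2 * a)‖ ^ 2 :=
  lift_metric_estimate_general m w a b y h1 h2 hy
end
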